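/- Let D be a Prüfer domain and ℓ a length function on D. Suppose P' ⊊ P are prime ideals of D and there exists a P-primary ideal Q with ℓ(D/Q) > 0. Then ℓ(D/P') = ∞. -/

import Mathlib

open scoped ENNReal

universe u

structure LengthFunction (R : Type u) [CommRing R] where
  toFun : ∀ (M : Type u) [AddCommGroup M] [Module R M], ℝ≥0∞
  zero' : ∀ (M : Type u) [AddCommGroup M] [Module R M], Subsingleton M → toFun M = 0
  additive : ∀ (M₁ M₂ M₃ : Type u) [AddCommGroup M₁] [Module R M₁]
      [AddCommGroup M₂] [Module R M₂] [AddCommGroup M₃] [Module R M₃]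
      (f : M₁ →ₗ[R] M₂) (g : M₂ →ₗ[R] M₃),
      Function.Injective f → Function.Surjective g →
      LinearMap.range f = LinearMap.ker g →
      toFun M₂ = toFun M₁ + toFun M₃
  upperContinuous : ∀ (M : Type u) [AddCommGroup M] [Module R M],
      toFun M = ⨆ (N : Submodule R M) (_ : N.FG), toFun N

/-- A Prüfer domain: the localization at every prime ideal is a valuation domain. -/
def IsPruferDomain (D : Type u) [CommRing D] [IsDomain D] : Prop :=
  ∀ (P : Ideal D) (hP : P.IsPrime), haveI := hP; ValuationRing (Localization.AtPrime P)

/-!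
Pick `a ∈ P \ P'`. The ideals of the valuation ring `D_P` are totally ordered and `Q`, `P'` are
contracted from `D_P`; since `rad Q = P ⊄ P'` this forces `P' ⊆ Q`. As `P'` is prime and `a ∉ P'`,
multiplication by `aⁿ` identifies `((aⁿ) + P')/((aⁿ⁺¹) + P')` with `D/((a) + P')`, so
`ℓ(D/((aⁿ) + P')) = n • ε` with `ε = ℓ(D/((a) + P'))`. Some `aᵏ` lies in `Q`, so `D/Q` is a quotient
of `D/((aᵏ) + P')` and `ε ≠ 0`; since every `D/((aⁿ) + P')` is a quotient of `D/P'`, the length of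
`D/P'` is at least `n • ε` for all `n`.
-/

namespace Ideal

variable {R : Type u} [CommRing R] {P' : Ideal R} {a : R}

theorem mul_pow_mem_span_pow_succ_sup_iff (hP' : P'.IsPrime) (ha : a ∉ P') (n : ℕ)
    {x : R} : a ^ n * x ∈ span {a ^ (n + 1)} ⊔ P' ↔ x ∈ span {a} ⊔ P' := by
  simp only [mem_span_singleton_sup]
  constructor
  · rintro ⟨c, p, hp, hcp⟩
    have hx : a ^ n * (x - c * a) ∈ P' := by
      rwa [show a ^ n * (x - c * a) = p by linear_combination -hcp]
    have hx' : x - c * a ∈ P' :=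
      (hP'.mem_or_mem hx).resolve_left fun h => ha (hP'.mem_of_pow_mem n h)
    exact ⟨c, x - c * a, hx', by ring⟩
  · rintro ⟨c, p, hp, rfl⟩
    exact ⟨c, a ^ n * p, P'.mul_mem_left _ hp, by ring⟩

theorem le_of_lt_radical_of_isPrimary [IsDomain R] {P Q : Ideal R} [P.IsPrime]
    [ValuationRing (Localization.AtPrime P)] (hP' : P'.IsPrime) (hQ : Q.IsPrimary)
    (hrad : Q.radical = P) (hlt : P' < P) : P' ≤ Q := by
  let S := Localization.AtPrime P
  have hQ_under : (Q.map (algebraMap R S)).under R = Q :=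
    IsLocalization.under_map_of_isPrimary_disjoint P.primeCompl S hQ
      (Set.disjoint_compl_left_iff_subset.2 (hrad ▸ Q.le_radical))
  have hP'_under : (P'.map (algebraMap R S)).under R = P' :=
    IsLocalization.under_map_of_isPrime_disjoint P.primeCompl S hP'
      (Set.disjoint_compl_left_iff_subset.2 hlt.le)
  rcases total_of (· ≤ ·) (Q.map (algebraMap R S)) (P'.map (algebraMap R S)) with h | h
  · refine absurd ?_ hlt.not_ge
    calc P = Q.radical := hrad.symm
      _ ≤ P'.radical := radical_mono (hQ_under ▸ hP'_under ▸ comap_mono h)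
      _ = P' := hP'.radical
  · exact hQ_under ▸ hP'_under ▸ comap_mono h

end Ideal

theorem ENNReal.eq_top_of_forall_nsmul_le {ε x : ℝ≥0∞} (hε : ε ≠ 0) (h : ∀ n : ℕ, n • ε ≤ x) :
    x = ⊤ := by
  have : (⨆ n : ℕ, (n : ℝ≥0∞)) * ε ≤ x := by
    rw [ENNReal.iSup_mul]
    exact iSup_le fun n => nsmul_eq_mul n ε ▸ h n
  rwa [ENNReal.iSup_natCast, ENNReal.top_mul hε, top_le_iff] at this

namespace LengthFunction

variable {R : Type u} [CommRing R] (ℓ : LengthFunction R)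
  {M N : Type u} [AddCommGroup M] [Module R M] [AddCommGroup N] [Module R N]

theorem toFun_eq_of_linearEquiv (e : M ≃ₗ[R] N) : ℓ.toFun M = ℓ.toFun N := by
  have h := ℓ.additive M N PUnit e.toLinearMap 0 e.injective
    (fun _ => ⟨0, Subsingleton.elim _ _⟩)
    (by rw [LinearMap.ker_zero]; exact LinearMap.range_eq_top.2 e.surjective)
  rw [ℓ.zero' PUnit inferInstance, add_zero] at h
  exact h.symm

theorem toFun_eq_add_quotient (N : Submodule R M) :
    ℓ.toFun M = ℓ.toFun N + ℓ.toFun (M ⧸ N) :=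
  ℓ.additive _ _ _ N.subtype N.mkQ N.injective_subtype N.mkQ_surjective
    (by rw [Submodule.range_subtype, Submodule.ker_mkQ])

theorem toFun_le_of_surjective {f : M →ₗ[R] N} (hf : Function.Surjective f) :
    ℓ.toFun N ≤ ℓ.toFun M := by
  rw [ℓ.toFun_eq_add_quotient (LinearMap.ker f),
    ℓ.toFun_eq_of_linearEquiv (f.quotKerEquivOfSurjective hf)]
  exact le_add_self

theorem toFun_quotient_eq_add {J I : Ideal R} (h : J ≤ I) :
    ℓ.toFun (R ⧸ J) = ℓ.toFun (Submodule.map J.mkQ I) + ℓ.toFun (R ⧸ I) := by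
  rw [ℓ.toFun_eq_add_quotient (Submodule.map J.mkQ I),
    ℓ.toFun_eq_of_linearEquiv (Submodule.quotientQuotientEquivQuotient J I h)]

theorem toFun_quotient_le {J I : Ideal R} (h : J ≤ I) :
    ℓ.toFun (R ⧸ I) ≤ ℓ.toFun (R ⧸ J) :=
  ℓ.toFun_le_of_surjective (Submodule.factor_surjective h)

variable {P' : Ideal R} {a : R}

open Ideal in
theorem toFun_map_mkQ_span_pow_sup (hP' : P'.IsPrime) (ha : a ∉ P') (n : ℕ) :
    ℓ.toFun (Submodule.map (span {a ^ (n + 1)} ⊔ P').mkQ (span {a ^ n} ⊔ P')) =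
      ℓ.toFun (R ⧸ (span {a} ⊔ P')) := by
  set J := span {a ^ (n + 1)} ⊔ P'
  let φ : R →ₗ[R] R ⧸ J := J.mkQ ∘ₗ LinearMap.toSpanSingleton R R (a ^ n)
  have hker : LinearMap.ker φ = span {a} ⊔ P' := by
    ext x
    simp only [φ, LinearMap.mem_ker, LinearMap.comp_apply, LinearMap.toSpanSingleton_apply,
      smul_eq_mul, Submodule.mkQ_apply, Submodule.Quotient.mk_eq_zero, mul_comm x]
    exact mul_pow_mem_span_pow_succ_sup_iff hP' ha n
  have hP'J : Submodule.map J.mkQ P' = ⊥ :=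
    le_bot_iff.1 (J.mkQ_map_self ▸ Submodule.map_mono le_sup_right)
  have hrange : LinearMap.range φ = Submodule.map J.mkQ (span {a ^ n} ⊔ P') := by
    rw [LinearMap.range_comp, ← LinearMap.span_singleton_eq_range, Submodule.map_sup, hP'J,
      sup_bot_eq]
  rw [← hrange, ← hker]
  exact (ℓ.toFun_eq_of_linearEquiv φ.quotKerEquivRange).symm

open Ideal in
theorem toFun_quotient_span_pow_sup (hP' : P'.IsPrime) (ha : a ∉ P') (n : ℕ) :
    ℓ.toFun (R ⧸ (span {a ^ n} ⊔ P')) = n • ℓ.toFun (R ⧸ (span {a} ⊔ P')) := by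
  induction n with
  | zero =>
    rw [pow_zero, span_singleton_one, top_sup_eq, zero_smul]
    exact ℓ.zero' _ (Submodule.Quotient.subsingleton_iff.2 rfl)
  | succ n ih =>
    have hle : span {a ^ (n + 1)} ⊔ P' ≤ span {a ^ n} ⊔ P' :=
      sup_le_sup_right (span_singleton_le_span_singleton.2 (pow_dvd_pow a n.le_succ)) _
    rw [ℓ.toFun_quotient_eq_add hle, ℓ.toFun_map_mkQ_span_pow_sup hP' ha, ih, succ_nsmul, add_comm]

end LengthFunction

theorem prufer_length_below_totalSpectrum {D : Type u} [CommRing D] [IsDomain D]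
    (hD : IsPruferDomain D) (ℓ : LengthFunction D) (P' P : Ideal D)
    (hP' : P'.IsPrime) (hP : P.IsPrime) (hlt : P' < P)
    (Q : Ideal D) (hQ : Q.IsPrimary) (hrad : Q.radical = P)
    (hpos : 0 < ℓ.toFun (D ⧸ Q)) :
    ℓ.toFun (D ⧸ P') = ⊤ := by
  have := hD P hP
  obtain ⟨a, haP, haP'⟩ := SetLike.exists_of_lt hlt
  obtain ⟨k, hk⟩ := Ideal.mem_radical_iff.1 (hrad ▸ haP : a ∈ Q.radical)
  have hP'Q : P' ≤ Q := Ideal.le_of_lt_radical_of_isPrimary hP' hQ hrad hlt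
  have hε : ℓ.toFun (D ⧸ (Ideal.span {a} ⊔ P')) ≠ 0 := by
    intro h0
    refine hpos.ne' (le_antisymm ?_ zero_le)
    calc ℓ.toFun (D ⧸ Q) ≤ ℓ.toFun (D ⧸ (Ideal.span {a ^ k} ⊔ P')) :=
          ℓ.toFun_quotient_le (sup_le ((Ideal.span_singleton_le_iff_mem Q).2 hk) hP'Q)
      _ = 0 := by rw [ℓ.toFun_quotient_span_pow_sup hP' haP', h0, smul_zero]
  refine ENNReal.eq_top_of_forall_nsmul_le hε fun n => ?_
  rw [← ℓ.toFun_quotient_span_pow_sup hP' haP' n]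
  exact ℓ.toFun_quotient_le le_sup_right
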